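/- Let K1, F1, Z1, S1 be positive integers with Z1 < F1 such that g = K1(F1−Z1)/S1 is a positive integer, and suppose there exists a g-regular (K1,F1,Z1,S1) placement delivery array satisfying Condition 1 with parameter λ. Then for every positive integer m there exists an (m·g)-regular (m·K1, λ·(F1/λ)^m, Z1·(F1/λ)^{m−1}, S1·(F1/λ)^{m−1}) placement delivery array. -/

import Mathlib

/-- A `(K,F,Z,S)` placement delivery array: an `F × K` array whose entries are either `*`
(encoded as `none`) or integers in `[1:S]` (encoded as `some s` with `s : Fin S`). -/
def IsPDA (K F Z S : ℕ) (P : Fin F → Fin K → Option (Fin S)) : Prop :=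
  (∀ k : Fin K, (Finset.univ.filter fun j : Fin F => P j k = none).card = Z) ∧
  (∀ s : Fin S, ∃ (j : Fin F) (k : Fin K), P j k = some s) ∧
  (∀ (j1 j2 : Fin F) (k1 k2 : Fin K) (s : Fin S),
      P j1 k1 = some s → P j2 k2 = some s → (j1, k1) ≠ (j2, k2) →
      P j1 k2 = none ∧ P j2 k1 = none)

/-- A PDA is `g`-regular if each integer appears exactly `g` times. -/
def PDARegular (K F S g : ℕ) (P : Fin F → Fin K → Option (Fin S)) : Prop :=
  ∀ s : Fin S,
    (Finset.univ.filter fun jk : Fin F × Fin K => P jk.1 jk.2 = some s).card = g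

/-- Row `i` is a star row for the integer `s`. -/
def PDAStarRow (K F S : ℕ) (P : Fin F → Fin K → Option (Fin S)) (i : Fin F) (s : Fin S) : Prop :=
  ∀ (j : Fin F) (k : Fin K), P j k = some s → P i k = none

/-- Condition 1 with parameter `lam`. -/
def PDACondition1 (K F Z S lam : ℕ) (P : Fin F → Fin K → Option (Fin S)) : Prop :=
  lam ∣ F ∧ lam ∣ Z ∧
  (∀ (j : Fin F) (k : Fin K),
      P j k = none ↔
        P ⟨j.val % (F / lam), Nat.lt_of_le_of_lt (Nat.mod_le _ _) j.isLt⟩ k = none) ∧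
  ∃ φ : Fin S → Fin (F / lam),
    (∀ s : Fin S, PDAStarRow K F S P (Fin.castLE (Nat.div_le_self F lam) (φ s)) s) ∧
    (∀ j : Fin (F / lam), (Finset.univ.filter fun s : Fin S => φ s = j).card * F = lam * S)

/-- Condition 2: every row contains the same number of stars. -/
def PDACondition2 (K F S : ℕ) (P : Fin F → Fin K → Option (Fin S)) : Prop :=
  ∀ j1 j2 : Fin F,
    (Finset.univ.filter fun k : Fin K => P j1 k = none).card =
    (Finset.univ.filter fun k : Fin K => P j2 k = none).card

/-!
Write the rows of `P` as pairs `(b, a)` with `b ∈ [1:λ]`, `a ∈ [1:F/λ]`. By Condition 1 the stars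
of `P` depend only on `a`, and the symbols can be relabelled as pairs `(φ s, t)` such that every
row `(b, φ s)` is a star row for `s`. The new array has rows `(b, x)` with `x ∈ [1:F/λ]^m` and
columns `(i, k)`; if `P((b, xᵢ), k) = (c, t)` its entry is `(x with xᵢ replaced by c, t)`, and a
star otherwise. A symbol `(v, t)` thus occurs in column block `i` exactly where `(vᵢ, t)` occurs in
`P`, which gives `m·g` occurrences. Two occurrences in one block satisfy (C3) because `P` does,
and occurrences in different blocks `i ≠ i'` because row `(b, vᵢ')` is a star row for `(vᵢ', t)`.
-/

open Finset

section Reindex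

variable {R C T R' C' T' : Type*} [Fintype R] [Fintype R']

def IsPDAOn (Z : ℕ) (P : R → C → Option T) : Prop :=
  (∀ k, #{j | P j k = none} = Z) ∧ (∀ s, ∃ j k, P j k = some s) ∧
  (∀ j1 j2 k1 k2 s, P j1 k1 = some s → P j2 k2 = some s → (j1, k1) ≠ (j2, k2) →
      P j1 k2 = none ∧ P j2 k1 = none)

def PDARegularOn [Fintype C] [DecidableEq T] (g : ℕ) (P : R → C → Option T) : Prop :=
  ∀ s, #{jk : R × C | P jk.1 jk.2 = some s} = g

omit [Fintype R'] in
theorem isPDA_iff_isPDAOn {K F Z S : ℕ} {P : Fin F → Fin K → Option (Fin S)} :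
    IsPDA K F Z S P ↔ IsPDAOn Z P := Iff.rfl

omit [Fintype R'] in
theorem pdaRegular_iff_pdaRegularOn {K F S g : ℕ} {P : Fin F → Fin K → Option (Fin S)} :
    PDARegular K F S g P ↔ PDARegularOn g P := Iff.rfl

variable {Z g : ℕ} {P : R → C → Option T} (eR : R' ≃ R) (eC : C' ≃ C) (eT : T ≃ T')

theorem IsPDAOn.reindex (hP : IsPDAOn Z P) :
    IsPDAOn Z fun r c => (P (eR r) (eC c)).map eT := by
  obtain ⟨hstars, hsurj, hpair⟩ := hP
  refine ⟨fun k => ?_, fun s => ?_, fun j1 j2 k1 k2 s h1 h2 hne => ?_⟩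
  · rw [← hstars (eC k)]
    exact card_equiv eR (by simp)
  · obtain ⟨j, k, h⟩ := hsurj (eT.symm s)
    exact ⟨eR.symm j, eC.symm k, by simp [h]⟩
  · simp only [Option.map_eq_some_iff, ← eT.eq_symm_apply, exists_eq_right] at h1 h2
    have hne' : (eR j1, eC k1) ≠ (eR j2, eC k2) := by
      simpa [Prod.ext_iff] using hne
    simpa using hpair _ _ _ _ _ h1 h2 hne'

theorem PDARegularOn.reindex [Fintype C] [Fintype C'] [DecidableEq T] [DecidableEq T']
    (hP : PDARegularOn g P) :
    PDARegularOn g fun r c => (P (eR r) (eC c)).map eT := by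
  intro s
  rw [← hP (eT.symm s)]
  exact card_equiv (eR.prodCongr eC) (by simp [← eT.eq_symm_apply])

end Reindex

section PowerArray

variable {B A U C I : Type*} [DecidableEq I]

def powerArray (P : B × A → C → Option (A × U)) (x : B × (I → A)) (y : I × C) :
    Option ((I → A) × U) :=
  (P (x.1, x.2 y.1) y.2).map fun s => (Function.update x.2 y.1 s.1, s.2)

variable {P : B × A → C → Option (A × U)}

theorem powerArray_eq_none {x : B × (I → A)} {y : I × C} :
    powerArray P x y = none ↔ P (x.1, x.2 y.1) y.2 = none :=
  Option.map_eq_none_iff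

theorem powerArray_eq_some {b : B} {x v : I → A} {i : I} {k : C} {u : U} :
    powerArray P (b, x) (i, k) = some (v, u) ↔
      x = Function.update v i (x i) ∧ P (b, x i) k = some (v i, u) := by
  simp only [powerArray, Option.map_eq_some_iff, Prod.mk.injEq]
  constructor
  · rintro ⟨s, hs, rfl, rfl⟩
    simpa using hs
  · rintro ⟨hx, hs⟩
    refine ⟨_, hs, ?_, rfl⟩
    rw [hx]
    simp

variable [Fintype B] [Fintype A] [Fintype I]

theorem card_filter_eval (p : B × A → Prop) [DecidablePred p] (i : I) :
    #{x : B × (I → A) | p (x.1, x.2 i)} = #{y | p y} * Fintype.card A ^ (Fintype.card I - 1) := by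
  let e : B × (I → A) ≃ (B × A) × ({j // j ≠ i} → A) :=
    ((Equiv.refl B).prodCongr (Equiv.funSplitAt i A)).trans (Equiv.prodAssoc _ _ _).symm
  rw [card_equiv e (t := {y : (B × A) × _ | p y.1}) (by simp [e]), ← univ_product_univ,
    filter_product_left, card_product, card_univ, Fintype.card_fun, Fintype.card_subtype_compl,
    Fintype.card_subtype_eq]

variable {Z g : ℕ}

omit [Fintype I] in
theorem powerArray_eq_none_of_eq_some (hP : IsPDAOn Z P)
    (hrow : ∀ r k s, P r k = some s → ∀ b, P (b, s.1) k = none)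
    {b₁ b₂ : B} {x₁ x₂ v : I → A} {i₁ i₂ : I} {k₁ k₂ : C} {u : U}
    (h₁ : powerArray P (b₁, x₁) (i₁, k₁) = some (v, u))
    (h₂ : powerArray P (b₂, x₂) (i₂, k₂) = some (v, u))
    (hne : ((b₁, x₁), (i₁, k₁)) ≠ ((b₂, x₂), (i₂, k₂))) :
    powerArray P (b₁, x₁) (i₂, k₂) = none := by
  rw [powerArray_eq_some] at h₁ h₂
  rw [powerArray_eq_none]
  by_cases hi : i₁ = i₂
  · subst hi
    refine (hP.2.2 _ _ _ _ _ h₁.2 h₂.2 fun heq => hne ?_).1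
    simp only [Prod.mk.injEq, true_and] at heq ⊢
    refine ⟨⟨heq.1.1, ?_⟩, heq.2⟩
    rw [h₁.1, h₂.1, heq.1.2]
  · have hx : x₁ i₂ = v i₂ := by
      rw [h₁.1, Function.update_of_ne (Ne.symm hi)]
    simpa [hx] using hrow _ _ _ h₂.2 b₁

theorem IsPDAOn.powerArray [Nonempty I] (hP : IsPDAOn Z P)
    (hrow : ∀ r k s, P r k = some s → ∀ b, P (b, s.1) k = none) :
    IsPDAOn (Z * Fintype.card A ^ (Fintype.card I - 1))
      (powerArray P : B × (I → A) → I × C → Option ((I → A) × U)) := by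
  refine ⟨fun ⟨i, k⟩ => ?_, fun ⟨v, u⟩ => ?_, ?_⟩
  · simp only [powerArray_eq_none]
    rw [card_filter_eval (fun r => P r k = none), hP.1 k]
  · let i : I := Classical.arbitrary I
    obtain ⟨⟨b, a⟩, k, h⟩ := hP.2.1 (v i, u)
    refine ⟨(b, Function.update v i a), (i, k), powerArray_eq_some.2 ?_⟩
    simpa using h
  · rintro ⟨b₁, x₁⟩ ⟨b₂, x₂⟩ ⟨i₁, k₁⟩ ⟨i₂, k₂⟩ ⟨v, u⟩ h₁ h₂ hne
    exact ⟨powerArray_eq_none_of_eq_some hP hrow h₁ h₂ hne,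
      powerArray_eq_none_of_eq_some hP hrow h₂ h₁ (Ne.symm hne)⟩

theorem PDARegularOn.powerArray [Fintype C] [DecidableEq A] [DecidableEq U]
    (hP : PDARegularOn g P) :
    PDARegularOn (Fintype.card I * g)
      (powerArray P : B × (I → A) → I × C → Option ((I → A) × U)) := by
  rintro ⟨v, u⟩
  rw [card_eq_sum_card_fiberwise (f := fun z => z.2.1) (t := univ) (by simp),
    sum_const_nat fun i _ => ?_, card_univ]
  rw [filter_filter, ← hP (v i, u)]
  refine card_nbij' (fun z => ((z.1.1, z.1.2 z.2.1), z.2.2))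
    (fun r => ((r.1.1, Function.update v i r.1.2), (i, r.2))) ?_ ?_ ?_ ?_
  · rintro ⟨⟨b, x⟩, i', k⟩ h
    simp only [coe_filter, mem_univ, true_and, Set.mem_ofPred_eq, powerArray_eq_some] at h ⊢
    obtain ⟨⟨-, h⟩, rfl⟩ := h
    exact h
  · rintro ⟨⟨b, a⟩, k⟩ h
    simp only [coe_filter, mem_univ, true_and, Set.mem_ofPred_eq, powerArray_eq_some] at h ⊢
    simpa using h
  · rintro ⟨⟨b, x⟩, i', k⟩ h
    simp only [coe_filter, mem_univ, true_and, Set.mem_ofPred_eq, powerArray_eq_some] at h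
    obtain ⟨⟨hx, -⟩, rfl⟩ := h
    simp [← hx]
  · intro r _
    simp

end PowerArray

theorem exists_equiv_prod_fst_eq {T A : Type*} [Fintype T] [DecidableEq A] (φ : T → A) {n : ℕ}
    (h : ∀ a, #{t | φ t = a} = n) : ∃ e : T ≃ A × Fin n, ∀ t, (e t).1 = φ t :=
  ⟨((Equiv.sigmaFiberEquiv φ).symm.trans (Equiv.sigmaCongrRight fun a =>
      Fintype.equivFinOfCardEq (by rw [Fintype.card_subtype, h a]))).trans
    (Equiv.sigmaEquivProd _ _), fun _ => rfl⟩

section Condition1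

variable {K F Z S lam g : ℕ} {P : Fin F → Fin K → Option (Fin S)}

theorem PDACondition1.exists_fiber_card_eq (hC : PDACondition1 K F Z S lam P) :
    ∃ (n : ℕ) (φ : Fin S → Fin (F / lam)),
      (∀ s, PDAStarRow K F S P (Fin.castLE (Nat.div_le_self F lam) (φ s)) s) ∧
      (∀ j, #{s | φ s = j} = n) ∧ n * (F / lam) = S := by
  obtain ⟨hF, -, -, φ, hrow, hfib⟩ := hC
  have hfib' (j : Fin (F / lam)) : #{s | φ s = j} * (F / lam) = S := by
    have hlam : 0 < lam := (Nat.div_pos_iff.1 j.pos).1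
    refine Nat.eq_of_mul_eq_mul_left hlam ?_
    rw [← hfib j, mul_left_comm, Nat.mul_div_cancel' hF]
  have hn (j : Fin (F / lam)) : #{s | φ s = j} = S / (F / lam) :=
    Nat.eq_div_of_mul_eq_left j.pos.ne' (hfib' j)
  refine ⟨S / (F / lam), φ, hrow, hn, ?_⟩
  calc S / (F / lam) * (F / lam) = ∑ j, #{s | φ s = j} := by simp [hn, mul_comm]
    _ = S := by rw [← card_eq_sum_card_fiberwise (by simp), card_univ, Fintype.card_fin]

theorem PDACondition1.exists_prod_reindex (hPDA : IsPDA K F Z S P) (hreg : PDARegular K F S g P)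
    (hC : PDACondition1 K F Z S lam P) :
    ∃ (n : ℕ) (P' : Fin lam × Fin (F / lam) → Fin K → Option (Fin (F / lam) × Fin n)),
      n * (F / lam) = S ∧ IsPDAOn Z P' ∧ PDARegularOn g P' ∧
      ∀ r k s, P' r k = some s → ∀ b, P' (b, s.1) k = none := by
  obtain ⟨n, φ, hrow, hfib, hn⟩ := hC.exists_fiber_card_eq
  obtain ⟨Θ, hΘ⟩ := exists_equiv_prod_fst_eq φ hfib
  let re : Fin lam × Fin (F / lam) ≃ Fin F :=
    finProdFinEquiv.trans (finCongr (Nat.mul_div_cancel' hC.1))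
  have hstar (b : Fin lam) (a : Fin (F / lam)) (k : Fin K) :
      P (re (b, a)) k = none ↔ P (Fin.castLE (Nat.div_le_self F lam) a) k = none := by
    rw [hC.2.2.1]
    congr!
    simp [re, Nat.mod_eq_of_lt a.isLt]
  refine ⟨n, fun r k => (P (re r) k).map Θ, hn,
    (isPDA_iff_isPDAOn.1 hPDA).reindex re (Equiv.refl _) Θ,
    (pdaRegular_iff_pdaRegularOn.1 hreg).reindex re (Equiv.refl _) Θ, ?_⟩
  intro r k s h b
  simp only [Option.map_eq_some_iff, ← Θ.eq_symm_apply, exists_eq_right] at h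
  rw [Option.map_eq_none_iff, hstar]
  have := hrow (Θ.symm s) _ _ h
  rwa [← hΘ, Θ.apply_symm_apply] at this

end Condition1

theorem cothm1_general (K1 F1 Z1 S1 lam g : ℕ)
    (hex : ∃ P : Fin F1 → Fin K1 → Option (Fin S1),
        IsPDA K1 F1 Z1 S1 P ∧ PDARegular K1 F1 S1 g P ∧
          PDACondition1 K1 F1 Z1 S1 lam P) :
    ∀ m : ℕ, 0 < m →
      ∃ Q : Fin (lam * (F1 / lam) ^ m) → Fin (m * K1) →
            Option (Fin (S1 * (F1 / lam) ^ (m - 1))),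
        IsPDA (m * K1) (lam * (F1 / lam) ^ m) (Z1 * (F1 / lam) ^ (m - 1))
          (S1 * (F1 / lam) ^ (m - 1)) Q ∧
        PDARegular (m * K1) (lam * (F1 / lam) ^ m) (S1 * (F1 / lam) ^ (m - 1)) (m * g) Q := by
  obtain ⟨P, hPDA, hreg, hC⟩ := hex
  intro m hm
  obtain ⟨n, P', hn, hP', hreg', hrow⟩ := hC.exists_prod_reindex hPDA hreg
  have : Nonempty (Fin m) := Fin.pos_iff_nonempty.1 hm
  have hS : (F1 / lam) ^ m * n = S1 * (F1 / lam) ^ (m - 1) := by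
    rw [← hn, ← Nat.sub_add_cancel hm, pow_succ, Nat.add_sub_cancel]
    ring
  let eR : Fin (lam * (F1 / lam) ^ m) ≃ Fin lam × (Fin m → Fin (F1 / lam)) :=
    (((Equiv.refl _).prodCongr finFunctionFinEquiv).trans finProdFinEquiv).symm
  let eT : (Fin m → Fin (F1 / lam)) × Fin n ≃ Fin (S1 * (F1 / lam) ^ (m - 1)) :=
    ((finFunctionFinEquiv.prodCongr (Equiv.refl _)).trans finProdFinEquiv).trans (finCongr hS)
  refine ⟨fun r c => (powerArray P' (eR r) (finProdFinEquiv.symm c)).map eT, ?_, ?_⟩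
  · simpa [isPDA_iff_isPDAOn] using (hP'.powerArray hrow).reindex eR finProdFinEquiv.symm eT
  · simpa [pdaRegular_iff_pdaRegularOn] using hreg'.powerArray.reindex eR finProdFinEquiv.symm eT

/-- Corollary 1: if there is a `g`-regular `(K1,F1,Z1,S1)` PDA with
`g = K1(F1-Z1)/S1` a positive integer, satisfying Condition 1 with parameter `lam`, then for
every positive integer `m` there is an `(m·g)`-regular
`(m·K1, lam·(F1/lam)^m, Z1·(F1/lam)^(m-1), S1·(F1/lam)^(m-1))` PDA. -/
theorem cothm1 (K1 F1 Z1 S1 lam g : ℕ)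
    (hK1 : 0 < K1) (hF1 : 0 < F1) (hZ1 : 0 < Z1) (hS1 : 0 < S1) (hlam : 0 < lam)
    (hZF : Z1 < F1) (hg : 0 < g) (hgdef : g * S1 = K1 * (F1 - Z1))
    (hex : ∃ P : Fin F1 → Fin K1 → Option (Fin S1),
        IsPDA K1 F1 Z1 S1 P ∧ PDARegular K1 F1 S1 g P ∧
          PDACondition1 K1 F1 Z1 S1 lam P) :
    ∀ m : ℕ, 0 < m →
      ∃ Q : Fin (lam * (F1 / lam) ^ m) → Fin (m * K1) →
            Option (Fin (S1 * (F1 / lam) ^ (m - 1))),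
        IsPDA (m * K1) (lam * (F1 / lam) ^ m) (Z1 * (F1 / lam) ^ (m - 1))
          (S1 * (F1 / lam) ^ (m - 1)) Q ∧
        PDARegular (m * K1) (lam * (F1 / lam) ^ m) (S1 * (F1 / lam) ^ (m - 1)) (m * g) Q :=
  cothm1_general K1 F1 Z1 S1 lam g hex
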